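/- Fix a ∈ (0,1) and let L(r) = (a - a·cos²(r)/(1 - a²·sin²(r))) / arctanh²(a·sin(r)) for r ∈ (0, π/2]. Then L(r) > 0 for all r ∈ (0, π/2], and L extends continuously to r = 0 with a positive limit. -/

import Mathlib

open Real Set Filter

/-- The inverse hyperbolic tangent on `(-1,1)`. -/
noncomputable def arctanh (x : ℝ) : ℝ := (1/2) * Real.log ((1 + x) / (1 - x))

lemma arctanh_pos {x : ℝ} (hx0 : 0 < x) (hx1 : x < 1) : 0 < arctanh x := by
  unfold arctanh
  have h1 : (1 : ℝ) < (1 + x) / (1 - x) := by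
    rw [lt_div_iff₀ (by linarith)]; linarith
  have := Real.log_pos h1
  linarith

lemma hasDerivAt_arctanh0 : HasDerivAt arctanh 1 0 := by
  have ha : HasDerivAt (fun x : ℝ => 1 + x) 1 0 := by
    simpa using (hasDerivAt_id (0:ℝ)).const_add 1
  have hb : HasDerivAt (fun x : ℝ => 1 - x) (-1) 0 := by
    simpa using (hasDerivAt_id (0:ℝ)).const_sub 1
  have h1 : HasDerivAt (fun x : ℝ => (1 + x) / (1 - x)) 2 0 := by
    have h := ha.div hb (by norm_num)
    exact h.congr_deriv (by norm_num)
  have hlog : HasDerivAt Real.log 1 ((1 + (0:ℝ)) / (1 - 0)) := by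
    have := Real.hasDerivAt_log (x := ((1 + (0:ℝ)) / (1 - 0))) (by norm_num)
    norm_num at this ⊢
    exact this
  have h2 : HasDerivAt (fun x : ℝ => Real.log ((1 + x) / (1 - x))) 2 0 := by
    have := hlog.comp 0 h1
    exact this.congr_deriv (by norm_num)
  have := h2.const_mul (1/2 : ℝ)
  norm_num at this
  exact this

lemma tendsto_arctanh_div : Tendsto (fun y => arctanh y / y) (nhdsWithin 0 {(0:ℝ)}ᶜ) (nhds 1) := by
  have h := hasDerivAt_iff_tendsto_slope.mp hasDerivAt_arctanh0
  refine h.congr fun y => ?_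
  have h0 : arctanh 0 = 0 := by unfold arctanh; norm_num
  simp [slope_def_field, h0]

/-- For `a ∈ (0,1)`, the sectional curvature
`L(r) = (a - a cos² r/(1 - a² sin² r)) / arctanh²(a sin r)` is positive on
`(0, π/2]` and extends continuously to `r = 0` with a positive limit. -/
theorem L_pos_and_limit (a : ℝ) (ha0 : 0 < a) (ha1 : a < 1) :
    (∀ r ∈ Ioc (0 : ℝ) (π / 2),
      0 < (a - a * Real.cos r ^ 2 / (1 - a ^ 2 * Real.sin r ^ 2)) /
            arctanh (a * Real.sin r) ^ 2) ∧
    ∃ c : ℝ, 0 < c ∧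
      Tendsto (fun r => (a - a * Real.cos r ^ 2 / (1 - a ^ 2 * Real.sin r ^ 2)) /
            arctanh (a * Real.sin r) ^ 2)
        (nhdsWithin 0 (Ioi 0)) (nhds c) := by
  have key : ∀ r : ℝ, 0 < r → r < π →
      0 < Real.sin r ∧ 0 < a * Real.sin r ∧ a * Real.sin r < 1 ∧
      0 < 1 - a ^ 2 * Real.sin r ^ 2 ∧ 0 < arctanh (a * Real.sin r) := by
    intro r hr hr'
    have hs : 0 < Real.sin r := Real.sin_pos_of_pos_of_lt_pi hr hr'
    have hs1 : Real.sin r ≤ 1 := Real.sin_le_one r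
    have hx0 : 0 < a * Real.sin r := by positivity
    have hx1 : a * Real.sin r < 1 := by nlinarith
    have hden : 0 < 1 - a ^ 2 * Real.sin r ^ 2 := by nlinarith
    exact ⟨hs, hx0, hx1, hden, arctanh_pos hx0 hx1⟩
  constructor
  · rintro r ⟨hr0, hr2⟩
    have hrπ : r < π := lt_of_le_of_lt hr2 (by linarith [Real.pi_pos])
    obtain ⟨hs, hx0, hx1, hden, hat⟩ := key r hr0 hrπ
    have hnum : 0 < a - a * Real.cos r ^ 2 / (1 - a ^ 2 * Real.sin r ^ 2) := by
      rw [sub_pos, div_lt_iff₀ hden]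
      have hc : Real.cos r ^ 2 = 1 - Real.sin r ^ 2 := Real.cos_sq' r
      have h2 : 0 < a * Real.sin r ^ 2 * (1 - a ^ 2) := by
        have ha2 : (0:ℝ) < 1 - a ^ 2 := by nlinarith
        have hs2 : (0:ℝ) < Real.sin r ^ 2 := pow_pos hs 2
        positivity
      nlinarith [h2, hc]
    exact div_pos hnum (pow_pos hat 2)
  · refine ⟨(1 - a ^ 2) / a, div_pos (by nlinarith) ha0, ?_⟩
    set l := nhdsWithin (0:ℝ) (Ioi 0)
    have hsin : Tendsto (fun r => a * Real.sin r) l (nhds 0) := by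
      have : Tendsto (fun r => a * Real.sin r) (nhds 0) (nhds (a * Real.sin 0)) :=
        (Real.continuous_sin.const_smul a).tendsto 0
      simpa using this.mono_left nhdsWithin_le_nhds
    have hmem : Ioo (0:ℝ) π ∈ l := Ioo_mem_nhdsGT_of_mem ⟨le_refl _, Real.pi_pos⟩
    have hposev : ∀ᶠ r in l, 0 < r ∧ r < π := by
      filter_upwards [hmem] with r hr using ⟨hr.1, hr.2⟩
    have hx : Tendsto (fun r => a * Real.sin r) l (nhdsWithin 0 {(0:ℝ)}ᶜ) := by
      refine tendsto_nhdsWithin_of_tendsto_nhds_of_eventually_within _ hsin ?_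
      filter_upwards [hposev] with r hr
      exact ne_of_gt (key r hr.1 hr.2).2.1
    have hratio : Tendsto (fun r => arctanh (a * Real.sin r) / (a * Real.sin r)) l (nhds 1) :=
      tendsto_arctanh_div.comp hx
    have hinv : Tendsto (fun r => (arctanh (a * Real.sin r) / (a * Real.sin r))⁻¹) l (nhds 1) := by
      simpa using hratio.inv₀ one_ne_zero
    have hden1 : Tendsto (fun r => 1 - a ^ 2 * Real.sin r ^ 2) l (nhds 1) := by
      have : Tendsto (fun r : ℝ => 1 - a ^ 2 * Real.sin r ^ 2) (nhds 0)
          (nhds (1 - a ^ 2 * Real.sin 0 ^ 2)) := by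
        exact (continuous_const.sub (continuous_const.mul (Real.continuous_sin.pow 2))).tendsto 0
      simpa using this.mono_left nhdsWithin_le_nhds
    have hdeninv : Tendsto (fun r => (1 - a ^ 2 * Real.sin r ^ 2)⁻¹) l (nhds 1) := by
      simpa using hden1.inv₀ one_ne_zero
    have hg : Tendsto (fun r => (1 - a ^ 2) / a * (1 - a ^ 2 * Real.sin r ^ 2)⁻¹ *
        ((arctanh (a * Real.sin r) / (a * Real.sin r))⁻¹) ^ 2) l (nhds ((1 - a ^ 2) / a)) := by
      have := ((tendsto_const_nhds (x := (1 - a ^ 2) / a) (f := l)).mul hdeninv).mul (hinv.pow 2)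
      simpa using this
    refine hg.congr' ?_
    filter_upwards [hposev] with r hr
    obtain ⟨hs, hx0, hx1, hden, hat⟩ := key r hr.1 hr.2
    have hc : Real.cos r ^ 2 = 1 - Real.sin r ^ 2 := Real.cos_sq' r
    rw [hc]
    field_simp
    ring
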